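/- arXiv:2206.04797 — 2 statements merged into one kernel-verified Lean document; each statement's English description precedes it below -/
import Mathlib

section
/- Let E and E' be finite-dimensional complex inner product spaces, A : E → E' complex-linear with adjoint A^*, λ > 0, 0 < m < 1, 0 < α < 2m/(2 − m)², μ ≥ 0 with Re⟪A^*(A x), x⟫ ≥ μ‖x‖² for all x ∈ E, and F : E → E m-monotone and Lipschitz with constant (2 − m). Let z ∈ E, define T(x) = (id + αλ·A^*A)⁻¹(x − α·F(x)), and suppose x* ∈ E satisfies x* = T(x*) + z. Then the iterates x₀ ∈ E, x_{n+1} = T(x_n) + z satisfy ‖x_n − x*‖ ≤ Lⁿ‖x₀ − x*‖ for all n, where L = √(1 − 2αm + α²(2 − m)²) / (1 + αλμ) < 1; in particular x_n converges to x*. -/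
open scoped InnerProductSpace

/-!
The regularised operator `B = id + αλ A^*A` satisfies `Re⟪B u, u⟫ ≥ (1 + αλμ)‖u‖²`, so in
finite dimension it is invertible with `‖B⁻¹ y‖ ≤ ‖y‖ / (1 + αλμ)`. Expanding
`‖(a - b) - α(F a - F b)‖²` and using `m`-monotonicity and `(2 - m)`-Lipschitz continuity of `F`
shows that the forward step `x ↦ x - αF x` is `√(1 - 2αm + α²(2 - m)²)`-Lipschitz. Hence
`T = B⁻¹ ∘ (id - αF)` is an `L`-contraction with `L < 1`, and the iterates of `T + z` approach
its fixed point `x*` geometrically.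
-/

open Filter Topology RCLike

section InnerProduct

variable {𝕜 E : Type*} [RCLike 𝕜] [NormedAddCommGroup E] [InnerProductSpace 𝕜 E]

theorem mul_norm_le_norm_of_mul_sq_le_re_inner {u v : E} {c : ℝ}
    (h : c * ‖u‖ ^ 2 ≤ re ⟪v, u⟫_𝕜) : c * ‖u‖ ≤ ‖v‖ := by
  rcases (norm_nonneg u).eq_or_lt with hu | hu
  · rw [← hu, mul_zero]
    exact norm_nonneg v
  · have hle : c * ‖u‖ * ‖u‖ ≤ ‖v‖ * ‖u‖ := by
      nlinarith [re_inner_le_norm (𝕜 := 𝕜) v u]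
    exact le_of_mul_le_mul_right hle hu

theorem one_add_mul_mul_norm_sq_le_re_inner_id_add_smul {S : E →ₗ[𝕜] E} {s μ : ℝ}
    (hs : 0 ≤ s) (hS : ∀ x, μ * ‖x‖ ^ 2 ≤ re ⟪S x, x⟫_𝕜) (u : E) :
    (1 + s * μ) * ‖u‖ ^ 2 ≤ re ⟪((LinearMap.id : E →ₗ[𝕜] E) + (s : 𝕜) • S) u, u⟫_𝕜 := by
  have hre : re ⟪((LinearMap.id : E →ₗ[𝕜] E) + (s : 𝕜) • S) u, u⟫_𝕜
      = ‖u‖ ^ 2 + s * re ⟪S u, u⟫_𝕜 := by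
    simp only [LinearMap.add_apply, LinearMap.id_apply, LinearMap.smul_apply, inner_add_left,
      inner_smul_left, map_add, conj_ofReal, re_ofReal_mul, inner_self_eq_norm_sq]
  rw [hre]
  linarith [mul_le_mul_of_nonneg_left (hS u) hs]

theorem norm_invFun_sub_invFun_le [FiniteDimensional 𝕜 E] {B : E →ₗ[𝕜] E} {c : ℝ} (hc : 0 < c)
    (hB : ∀ u, c * ‖u‖ ≤ ‖B u‖) (y y' : E) :
    ‖Function.invFun B y - Function.invFun B y'‖ ≤ ‖y - y'‖ / c := by
  have hinj : Function.Injective B := by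
    refine (injective_iff_map_eq_zero B).2 fun u hu => norm_le_zero_iff.1 ?_
    have := hB u
    rw [hu, norm_zero] at this
    nlinarith [norm_nonneg u]
  have hright : Function.RightInverse (Function.invFun B) B :=
    Function.rightInverse_invFun (LinearMap.injective_iff_surjective.1 hinj)
  rw [le_div_iff₀ hc, mul_comm]
  simpa only [map_sub, hright y, hright y'] using hB (Function.invFun B y - Function.invFun B y')

theorem norm_sub_smul_sub_le_sqrt {F : E → E} {m K α : ℝ} (hα : 0 ≤ α)
    (hmono : ∀ x y, m * ‖x - y‖ ^ 2 ≤ re ⟪F x - F y, x - y⟫_𝕜)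
    (hlip : ∀ x y, ‖F x - F y‖ ≤ K * ‖x - y‖) (a b : E) :
    ‖(a - (α : 𝕜) • F a) - (b - (α : 𝕜) • F b)‖
      ≤ √(1 - 2 * α * m + α ^ 2 * K ^ 2) * ‖a - b‖ := by
  have hsplit : (a - (α : 𝕜) • F a) - (b - (α : 𝕜) • F b) = (a - b) - (α : 𝕜) • (F a - F b) := by
    rw [smul_sub]; abel
  have hexpand : ‖(a - b) - (α : 𝕜) • (F a - F b)‖ ^ 2
      = ‖a - b‖ ^ 2 - 2 * α * re ⟪F a - F b, a - b⟫_𝕜 + α ^ 2 * ‖F a - F b‖ ^ 2 := by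
    rw [norm_sub_sq (𝕜 := 𝕜), inner_smul_right, re_ofReal_mul, inner_re_symm, norm_smul,
      norm_ofReal, abs_of_nonneg hα]
    ring
  have hlip2 : ‖F a - F b‖ ^ 2 ≤ K ^ 2 * ‖a - b‖ ^ 2 := by
    rw [← mul_pow]; exact pow_le_pow_left₀ (norm_nonneg _) (hlip a b) 2
  have hsq : ‖(a - b) - (α : 𝕜) • (F a - F b)‖ ^ 2
      ≤ (1 - 2 * α * m + α ^ 2 * K ^ 2) * ‖a - b‖ ^ 2 := by
    rw [hexpand]
    nlinarith [mul_le_mul_of_nonneg_left (hmono a b) hα,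
      mul_le_mul_of_nonneg_left hlip2 (sq_nonneg α)]
  rw [hsplit, ← Real.sqrt_sq (norm_nonneg (a - b)), ← Real.sqrt_mul' _ (sq_nonneg _)]
  exact (Real.abs_le_sqrt hsq).trans' (le_abs_self _)

end InnerProduct

theorem sqrt_one_sub_two_mul_add_sq_mul_lt_one {α m K : ℝ} (hα : 0 < α) (h : α * K ^ 2 < 2 * m) :
    √(1 - 2 * α * m + α ^ 2 * K ^ 2) < 1 := by
  rw [Real.sqrt_lt' one_pos]
  nlinarith

section Iteration

variable {X : Type*} [PseudoMetricSpace X]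

theorem dist_le_pow_mul_of_fixed_point {G : X → X} {L : ℝ} (hL : 0 ≤ L)
    (hG : ∀ a b, dist (G a) (G b) ≤ L * dist a b) {p : X} (hp : G p = p) {x : ℕ → X}
    (hx : ∀ n, x (n + 1) = G (x n)) (n : ℕ) : dist (x n) p ≤ L ^ n * dist (x 0) p := by
  induction n with
  | zero => simp
  | succ n ih =>
    calc dist (x (n + 1)) p = dist (G (x n)) (G p) := by rw [hx, hp]
      _ ≤ L * dist (x n) p := hG _ _
      _ ≤ L * (L ^ n * dist (x 0) p) := mul_le_mul_of_nonneg_left ih hL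
      _ = L ^ (n + 1) * dist (x 0) p := by ring

theorem tendsto_of_dist_le_pow_mul {x : ℕ → X} {p : X} {L C : ℝ} (hL0 : 0 ≤ L) (hL1 : L < 1)
    (h : ∀ n, dist (x n) p ≤ L ^ n * C) : Tendsto x atTop (𝓝 p) := by
  refine tendsto_iff_dist_tendsto_zero.2 (squeeze_zero (fun _ => dist_nonneg) h ?_)
  simpa using (tendsto_pow_atTop_nhds_zero_of_lt_one hL0 hL1).mul_const C

end Iteration

theorem mol_iterates_converge_general
    {E E' : Type*} [NormedAddCommGroup E] [InnerProductSpace ℂ E] [FiniteDimensional ℂ E]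
    [NormedAddCommGroup E'] [InnerProductSpace ℂ E'] [FiniteDimensional ℂ E']
    (A : E →ₗ[ℂ] E') (lam α m μ : ℝ)
    (hlam : 0 < lam) (hm1 : m < 1)
    (hα0 : 0 < α) (hα : α < 2 * m / (2 - m) ^ 2) (hμ : 0 ≤ μ)
    (hcoer : ∀ x : E, μ * ‖x‖ ^ 2 ≤ (⟪(LinearMap.adjoint A) (A x), x⟫_ℂ).re)
    (F : E → E)
    (hFmono : ∀ x y : E, m * ‖x - y‖ ^ 2 ≤ (⟪F x - F y, x - y⟫_ℂ).re)
    (hFlip : ∀ x y : E, ‖F x - F y‖ ≤ (2 - m) * ‖x - y‖)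
    (T : E → E)
    (hT : T = fun x : E =>
      Function.invFun
        ⇑((LinearMap.id : E →ₗ[ℂ] E) +
            ((α * lam : ℝ) : ℂ) • ((LinearMap.adjoint A).comp A))
        (x - (α : ℂ) • F x))
    (z : E) (xstar : E) (hxstar : xstar = T xstar + z)
    (x : ℕ → E) (hiter : ∀ n : ℕ, x (n + 1) = T (x n) + z)
    (L : ℝ)
    (hL : L = Real.sqrt (1 - 2 * α * m + α ^ 2 * (2 - m) ^ 2) / (1 + α * lam * μ)) :
    L < 1 ∧
      (∀ n : ℕ, ‖x n - xstar‖ ≤ L ^ n * ‖x 0 - xstar‖) ∧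
      Filter.Tendsto x Filter.atTop (nhds xstar) := by
  have hden : 1 ≤ 1 + α * lam * μ := le_add_of_nonneg_right (by positivity)
  have hrate := sqrt_one_sub_two_mul_add_sq_mul_lt_one hα0
    ((lt_div_iff₀ (pow_pos (by linarith) 2)).1 hα)
  have hL0 : 0 ≤ L := hL ▸ by positivity
  have hL1 : L < 1 := by
    rw [hL, div_lt_one (by linarith)]
    linarith
  have hB := fun u => mul_norm_le_norm_of_mul_sq_le_re_inner
    (one_add_mul_mul_norm_sq_le_re_inner_id_add_smul (s := α * lam)
      (S := (LinearMap.adjoint A).comp A) (by positivity) hcoer u)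
  have hcontr : ∀ a b, dist (T a + z) (T b + z) ≤ L * dist a b := by
    intro a b
    rw [dist_add_right, dist_eq_norm, dist_eq_norm, hL, hT]
    calc _ ≤ ‖(a - (α : ℂ) • F a) - (b - (α : ℂ) • F b)‖ / (1 + α * lam * μ) :=
          norm_invFun_sub_invFun_le (by linarith) hB _ _
      _ ≤ √(1 - 2 * α * m + α ^ 2 * (2 - m) ^ 2) * ‖a - b‖ / (1 + α * lam * μ) := by
          gcongr
          exact norm_sub_smul_sub_le_sqrt hα0.le hFmono hFlip a b
      _ = _ := by ring
  have hdist := dist_le_pow_mul_of_fixed_point hL0 hcontr hxstar.symm hiter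
  exact ⟨hL1, fun n => by simpa only [dist_eq_norm] using hdist n,
    tendsto_of_dist_le_pow_mul hL0 hL1 hdist⟩

/-- Paper's Proposition IV.2: the MOL iterates converge geometrically to the
fixed point `x*` with rate `L = √(1 − 2αm + α²(2 − m)²)/(1 + αλμ) < 1`. -/
theorem mol_iterates_converge
    {E E' : Type*} [NormedAddCommGroup E] [InnerProductSpace ℂ E] [FiniteDimensional ℂ E]
    [NormedAddCommGroup E'] [InnerProductSpace ℂ E'] [FiniteDimensional ℂ E']
    (A : E →ₗ[ℂ] E') (lam α m μ : ℝ)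
    (hlam : 0 < lam) (hm0 : 0 < m) (hm1 : m < 1)
    (hα0 : 0 < α) (hα : α < 2 * m / (2 - m) ^ 2) (hμ : 0 ≤ μ)
    (hcoer : ∀ x : E, μ * ‖x‖ ^ 2 ≤ (⟪(LinearMap.adjoint A) (A x), x⟫_ℂ).re)
    (F : E → E)
    (hFmono : ∀ x y : E, m * ‖x - y‖ ^ 2 ≤ (⟪F x - F y, x - y⟫_ℂ).re)
    (hFlip : ∀ x y : E, ‖F x - F y‖ ≤ (2 - m) * ‖x - y‖)
    (T : E → E)
    (hT : T = fun x : E =>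
      Function.invFun
        ⇑((LinearMap.id : E →ₗ[ℂ] E) +
            ((α * lam : ℝ) : ℂ) • ((LinearMap.adjoint A).comp A))
        (x - (α : ℂ) • F x))
    (z : E) (xstar : E) (hxstar : xstar = T xstar + z)
    (x : ℕ → E) (hiter : ∀ n : ℕ, x (n + 1) = T (x n) + z)
    (L : ℝ)
    (hL : L = Real.sqrt (1 - 2 * α * m + α ^ 2 * (2 - m) ^ 2) / (1 + α * lam * μ)) :
    L < 1 ∧
      (∀ n : ℕ, ‖x n - xstar‖ ≤ L ^ n * ‖x 0 - xstar‖) ∧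
      Filter.Tendsto x Filter.atTop (nhds xstar) :=
  mol_iterates_converge_general A lam α m μ hlam hm1 hα0 hα hμ hcoer F hFmono hFlip T hT z xstar
    hxstar x hiter L hL
end

section
/- Let E and E' be finite-dimensional complex inner product spaces, A : E → E' complex-linear with adjoint A^*, λ > 0, 0 < m < 1, 0 < α < 2m/(2 − m)², μ ≥ 0 with Re⟪A^*(A x), x⟫ ≥ μ‖x‖² for all x ∈ E, and F : E → E m-monotone and Lipschitz with constant (2 − m). Define T(x) = (id + αλ·A^*A)⁻¹(x − α·F(x)) and Q = (id + αλ·A^*A)⁻¹. For w₁, w₂ ∈ E, let x₁*, x₂* ∈ E satisfy x_i* = T(x_i*) + αλ·Q(w_i) for i = 1, 2, and set δ = w₂ − w₁ and Δ = x₂* − x₁*. Then ‖Δ‖ ≤ (αλ/(1 + αλμ)) · (1 / (1 − √(1 − 2αm + α²(2 − m)²))) · ‖δ‖. -/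
/-!
The resolvent `Q = (id + αλ A^*A)⁻¹` exists because `id + αλ A^*A` is `(1 + αλμ)`-coercive, which
also makes `Q` Lipschitz with constant `(1 + αλμ)⁻¹ ≤ 1`. Strong monotonicity and Lipschitz
continuity of `F` make the forward step `x ↦ x - αF x` a contraction with factor
`q = √(1 - 2αm + α²(2 - m)²) < 1`, hence so is `T`. Subtracting the two fixed-point equations then
gives `(1 - q)‖Δ‖ ≤ αλ ‖Q w₂ - Q w₁‖ ≤ αλ/(1 + αλμ) ‖δ‖`.
-/

open scoped InnerProductSpace

open RCLike

section Coercive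

variable {𝕜 E : Type*} [RCLike 𝕜] [NormedAddCommGroup E] [InnerProductSpace 𝕜 E]

theorem mul_norm_le_norm_of_mul_norm_sq_le_re_inner {u y : E} {c : ℝ}
    (h : c * ‖y‖ ^ 2 ≤ re ⟪u, y⟫_𝕜) : c * ‖y‖ ≤ ‖u‖ := by
  rcases (norm_nonneg y).eq_or_lt with hy | hy
  · simp [← hy]
  · have : c * ‖y‖ * ‖y‖ ≤ ‖u‖ * ‖y‖ := by
      nlinarith [re_inner_le_norm (𝕜 := 𝕜) u y]
    exact le_of_mul_le_mul_right this hy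

variable [FiniteDimensional 𝕜 E] {M : E →ₗ[𝕜] E} {c : ℝ}

theorem LinearMap.surjective_of_coercive (hc : 0 < c)
    (hM : ∀ y, c * ‖y‖ ^ 2 ≤ re ⟪M y, y⟫_𝕜) : Function.Surjective M := by
  refine LinearMap.injective_iff_surjective.mp fun a b hab => ?_
  have h := mul_norm_le_norm_of_mul_norm_sq_le_re_inner (hM (a - b))
  rw [map_sub, hab, sub_self, norm_zero] at h
  exact sub_eq_zero.mp (norm_le_zero_iff.mp (nonpos_of_mul_nonpos_right h hc))

theorem LinearMap.norm_invFun_sub_le_of_coercive (hc : 0 < c)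
    (hM : ∀ y, c * ‖y‖ ^ 2 ≤ re ⟪M y, y⟫_𝕜) (u v : E) :
    ‖Function.invFun M u - Function.invFun M v‖ ≤ c⁻¹ * ‖u - v‖ := by
  have hMQ := Function.rightInverse_invFun (M.surjective_of_coercive hc hM)
  have h := mul_norm_le_norm_of_mul_norm_sq_le_re_inner
    (hM (Function.invFun M u - Function.invFun M v))
  rw [map_sub, hMQ u, hMQ v] at h
  rwa [le_inv_mul_iff₀ hc]

end Coercive

section Regularized

variable {𝕜 E E' : Type*} [RCLike 𝕜] [NormedAddCommGroup E] [InnerProductSpace 𝕜 E]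
  [FiniteDimensional 𝕜 E] [NormedAddCommGroup E'] [InnerProductSpace 𝕜 E'] [FiniteDimensional 𝕜 E']

theorem coercive_id_add_smul_adjoint_comp_self (A : E →ₗ[𝕜] E') {t μ : ℝ} (ht : 0 ≤ t)
    (hA : ∀ x, μ * ‖x‖ ^ 2 ≤ re ⟪LinearMap.adjoint A (A x), x⟫_𝕜) (y : E) :
    (1 + t * μ) * ‖y‖ ^ 2 ≤
      re ⟪((LinearMap.id : E →ₗ[𝕜] E) + (t : 𝕜) • (LinearMap.adjoint A).comp A) y, y⟫_𝕜 := by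
  have h : re ⟪((LinearMap.id : E →ₗ[𝕜] E) + (t : 𝕜) • (LinearMap.adjoint A).comp A) y, y⟫_𝕜 =
      ‖y‖ ^ 2 + t * re ⟪LinearMap.adjoint A (A y), y⟫_𝕜 := by
    simp [inner_add_left, inner_smul_left]
  rw [h]
  nlinarith [hA y]

end Regularized

section ForwardStep

variable {𝕜 E : Type*} [RCLike 𝕜] [NormedAddCommGroup E] [InnerProductSpace 𝕜 E]

theorem norm_sub_smul_sq_le {d f : E} {α m L : ℝ} (hα : 0 ≤ α)
    (hmono : m * ‖d‖ ^ 2 ≤ re ⟪f, d⟫_𝕜) (hlip : ‖f‖ ≤ L * ‖d‖) :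
    ‖d - (α : 𝕜) • f‖ ^ 2 ≤ (1 - 2 * α * m + α ^ 2 * L ^ 2) * ‖d‖ ^ 2 := by
  have hsq : ‖f‖ ^ 2 ≤ (L * ‖d‖) ^ 2 := pow_le_pow_left₀ (norm_nonneg f) hlip 2
  have hre : re ⟪d, (α : 𝕜) • f⟫_𝕜 = α * re ⟪f, d⟫_𝕜 := by
    rw [inner_smul_right, re_ofReal_mul, inner_re_symm]
  rw [norm_sub_sq (𝕜 := 𝕜), hre, norm_smul, norm_of_nonneg hα]
  nlinarith [mul_le_mul_of_nonneg_left hmono hα, mul_le_mul_of_nonneg_left hsq (sq_nonneg α)]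

theorem norm_sub_smul_sub_le_sqrt_mul {F : E → E} {α m L : ℝ} (hα : 0 ≤ α)
    (hmono : ∀ x y, m * ‖x - y‖ ^ 2 ≤ re ⟪F x - F y, x - y⟫_𝕜)
    (hlip : ∀ x y, ‖F x - F y‖ ≤ L * ‖x - y‖) (x y : E) :
    ‖(x - (α : 𝕜) • F x) - (y - (α : 𝕜) • F y)‖ ≤
      √(1 - 2 * α * m + α ^ 2 * L ^ 2) * ‖x - y‖ := by
  have h := norm_sub_smul_sq_le hα (hmono x y) (hlip x y)
  rw [show (x - (α : 𝕜) • F x) - (y - (α : 𝕜) • F y) = (x - y) - (α : 𝕜) • (F x - F y) by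
    rw [smul_sub]; abel]
  calc _ = √(‖(x - y) - (α : 𝕜) • (F x - F y)‖ ^ 2) := (Real.sqrt_sq (norm_nonneg _)).symm
    _ ≤ √((1 - 2 * α * m + α ^ 2 * L ^ 2) * ‖x - y‖ ^ 2) := Real.sqrt_le_sqrt h
    _ = _ := by rw [Real.sqrt_mul' _ (sq_nonneg _), Real.sqrt_sq (norm_nonneg _)]

end ForwardStep

theorem sqrt_one_sub_two_mul_add_sq_lt_one {α m L : ℝ} (hα0 : 0 < α)
    (hα : α < 2 * m / L ^ 2) : √(1 - 2 * α * m + α ^ 2 * L ^ 2) < 1 := by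
  -- `L = 0` is excluded only through `2 * m / 0 = 0`, which makes `hα` read `α < 0`.
  have hL : 0 < L ^ 2 := by
    refine (sq_nonneg L).lt_of_ne' fun hL => ?_
    rw [hL, div_zero] at hα
    linarith
  have : α * L ^ 2 < 2 * m := (lt_div_iff₀ hL).mp hα
  rw [Real.sqrt_lt' one_pos]
  nlinarith

theorem norm_sub_le_div_one_sub_of_eq_add {E : Type*} [SeminormedAddCommGroup E]
    {T : E → E} {q : ℝ} (hq : q < 1) {x₁ x₂ y₁ y₂ : E}
    (hT : ‖T x₂ - T x₁‖ ≤ q * ‖x₂ - x₁‖) (hx₁ : x₁ = T x₁ + y₁) (hx₂ : x₂ = T x₂ + y₂) :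
    ‖x₂ - x₁‖ ≤ ‖y₂ - y₁‖ / (1 - q) := by
  have h : x₂ - x₁ = (T x₂ - T x₁) + (y₂ - y₁) := by
    conv_lhs => rw [hx₂, hx₁]
    abel
  have := norm_add_le (T x₂ - T x₁) (y₂ - y₁)
  rw [← h] at this
  rw [le_div_iff₀ (by linarith)]
  linarith

theorem mol_fixed_point_robustness_general
    {E E' : Type*} [NormedAddCommGroup E] [InnerProductSpace ℂ E] [FiniteDimensional ℂ E]
    [NormedAddCommGroup E'] [InnerProductSpace ℂ E'] [FiniteDimensional ℂ E']
    (A : E →ₗ[ℂ] E') (lam α m μ : ℝ)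
    (hlam : 0 < lam)
    (hα0 : 0 < α) (hα : α < 2 * m / (2 - m) ^ 2) (hμ : 0 ≤ μ)
    (hcoer : ∀ x : E, μ * ‖x‖ ^ 2 ≤ (⟪(LinearMap.adjoint A) (A x), x⟫_ℂ).re)
    (F : E → E)
    (hFmono : ∀ x y : E, m * ‖x - y‖ ^ 2 ≤ (⟪F x - F y, x - y⟫_ℂ).re)
    (hFlip : ∀ x y : E, ‖F x - F y‖ ≤ (2 - m) * ‖x - y‖)
    (Q : E → E)
    (hQ : Q = Function.invFun
      ⇑((LinearMap.id : E →ₗ[ℂ] E) +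
          ((α * lam : ℝ) : ℂ) • ((LinearMap.adjoint A).comp A)))
    (T : E → E)
    (hT : T = fun x : E => Q (x - (α : ℂ) • F x))
    (w₁ w₂ : E) (x₁ x₂ : E)
    (hx₁ : x₁ = T x₁ + ((α * lam : ℝ) : ℂ) • Q w₁)
    (hx₂ : x₂ = T x₂ + ((α * lam : ℝ) : ℂ) • Q w₂) :
    ‖x₂ - x₁‖ ≤
      (α * lam / (1 + α * lam * μ)) *
        (1 / (1 - Real.sqrt (1 - 2 * α * m + α ^ 2 * (2 - m) ^ 2))) *
        ‖w₂ - w₁‖ := by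
  set q := Real.sqrt (1 - 2 * α * m + α ^ 2 * (2 - m) ^ 2)
  have hq : q < 1 := sqrt_one_sub_two_mul_add_sq_lt_one hα0 hα
  have hαlam : 0 < α * lam := mul_pos hα0 hlam
  have hκ : 1 ≤ 1 + α * lam * μ := le_add_of_nonneg_right (mul_nonneg hαlam.le hμ)
  have hQlip : ∀ u v, ‖Q u - Q v‖ ≤ (1 + α * lam * μ)⁻¹ * ‖u - v‖ := by
    rw [hQ]
    exact LinearMap.norm_invFun_sub_le_of_coercive (by linarith)
      (coercive_id_add_smul_adjoint_comp_self A hαlam.le hcoer)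
  have hTlip : ‖T x₂ - T x₁‖ ≤ q * ‖x₂ - x₁‖ := by
    rw [hT]
    calc _ ≤ ‖(x₂ - (α : ℂ) • F x₂) - (x₁ - (α : ℂ) • F x₁)‖ :=
          (hQlip _ _).trans (mul_le_of_le_one_left (norm_nonneg _) (inv_le_one_of_one_le₀ hκ))
      _ ≤ q * ‖x₂ - x₁‖ := norm_sub_smul_sub_le_sqrt_mul hα0.le hFmono hFlip x₂ x₁
  calc ‖x₂ - x₁‖ ≤ ‖((α * lam : ℝ) : ℂ) • Q w₂ - ((α * lam : ℝ) : ℂ) • Q w₁‖ / (1 - q) :=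
        norm_sub_le_div_one_sub_of_eq_add hq hTlip hx₁ hx₂
    _ ≤ α * lam * ((1 + α * lam * μ)⁻¹ * ‖w₂ - w₁‖) / (1 - q) := by
        rw [← smul_sub, norm_smul, Complex.norm_real, Real.norm_of_nonneg hαlam.le]
        gcongr
        exact hQlip _ _
    _ = _ := by ring

/-- Paper's Proposition IV.3: sensitivity of the MOL fixed point to input
perturbations. If `x_i* = T(x_i*) + αλ Q(w_i)` for `i = 1, 2`, then
`‖x₂* − x₁*‖ ≤ (αλ/(1 + αλμ)) (1/(1 − √(1 − 2αm + α²(2 − m)²))) ‖w₂ − w₁‖`. -/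
theorem mol_fixed_point_robustness
    {E E' : Type*} [NormedAddCommGroup E] [InnerProductSpace ℂ E] [FiniteDimensional ℂ E]
    [NormedAddCommGroup E'] [InnerProductSpace ℂ E'] [FiniteDimensional ℂ E']
    (A : E →ₗ[ℂ] E') (lam α m μ : ℝ)
    (hlam : 0 < lam) (hm0 : 0 < m) (hm1 : m < 1)
    (hα0 : 0 < α) (hα : α < 2 * m / (2 - m) ^ 2) (hμ : 0 ≤ μ)
    (hcoer : ∀ x : E, μ * ‖x‖ ^ 2 ≤ (⟪(LinearMap.adjoint A) (A x), x⟫_ℂ).re)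
    (F : E → E)
    (hFmono : ∀ x y : E, m * ‖x - y‖ ^ 2 ≤ (⟪F x - F y, x - y⟫_ℂ).re)
    (hFlip : ∀ x y : E, ‖F x - F y‖ ≤ (2 - m) * ‖x - y‖)
    (Q : E → E)
    (hQ : Q = Function.invFun
      ⇑((LinearMap.id : E →ₗ[ℂ] E) +
          ((α * lam : ℝ) : ℂ) • ((LinearMap.adjoint A).comp A)))
    (T : E → E)
    (hT : T = fun x : E => Q (x - (α : ℂ) • F x))
    (w₁ w₂ : E) (x₁ x₂ : E)
    (hx₁ : x₁ = T x₁ + ((α * lam : ℝ) : ℂ) • Q w₁)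
    (hx₂ : x₂ = T x₂ + ((α * lam : ℝ) : ℂ) • Q w₂) :
    ‖x₂ - x₁‖ ≤
      (α * lam / (1 + α * lam * μ)) *
        (1 / (1 - Real.sqrt (1 - 2 * α * m + α ^ 2 * (2 - m) ^ 2))) *
        ‖w₂ - w₁‖ :=
  mol_fixed_point_robustness_general A lam α m μ hlam hα0 hα hμ hcoer F hFmono hFlip Q hQ T hT w₁ w₂
    x₁ x₂ hx₁ hx₂
end
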